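/- Work in the ring Λ := ℤ[t₁^{±1}, t₂^{±1}] of Laurent polynomials in two variables (equivalently, the group ring ℤ[ℤ²]). Let G₂ be the 2×2 matrix over Λ given by G₂ = [[t₁ − t₁t₂⁻¹ − t₂⁻², −t₁⁻¹t₂⁻⁶ − t₂⁻⁵], [−t₁⁻¹t₂⁻² − t₁ − t₂⁻¹, −t₁⁻²t₂⁻⁶ − t₁⁻¹t₂⁻⁵ − t₂⁻⁴ − t₂⁻³ − t₂⁻² − t₂⁻¹ − 1]]. Then det G₂ = −t₁⁻¹t₂⁻⁶ − t₁ + t₂⁻⁴ + t₂⁻³ + t₂⁻², and for all integers a, b one has det G₂ ≠ t₁^a t₂^b and det G₂ ≠ −t₁^a t₂^b. -/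

import Mathlib

open Matrix

/-- The Laurent polynomial ring `ℤ[t₁^{±1}, t₂^{±1}]`, realized as the group ring `ℤ[ℤ²]`. -/
noncomputable abbrev TwoVarLaurent : Type := AddMonoidAlgebra ℤ (ℤ × ℤ)

/-- The monomial `t₁^a * t₂^b` in `ℤ[t₁^{±1}, t₂^{±1}]`. -/
noncomputable def mono (a b : ℤ) : TwoVarLaurent := AddMonoidAlgebra.single (a, b) 1

/-! A monomial `±t₁^a t₂^b` has at most one nonzero coefficient, while the determinant of `G₂`,
expanded with `t₁^a t₂^b · t₁^c t₂^d = t₁^(a+c) t₂^(b+d)`, has nonzero coefficients at both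
`t₂⁻⁴` and `t₂⁻³`. -/

lemma AddMonoidAlgebra.ne_single_of_mem_support {R M : Type*} [Semiring R]
    {f : AddMonoidAlgebra R M} {x y : M} (hxy : x ≠ y) (hx : x ∈ f.coeff.support)
    (hy : y ∈ f.coeff.support) (m : M) (r : R) :
    f ≠ single m r := by
  rintro rfl
  rw [coeff_single] at hx hy
  have hxm : x = m := Finset.mem_singleton.mp (Finsupp.support_single_subset hx)
  have hym : y = m := Finset.mem_singleton.mp (Finsupp.support_single_subset hy)
  exact hxy (hxm.trans hym.symm)

lemma mono_mul (a b c d : ℤ) : mono a b * mono c d = mono (a + c) (b + d) := by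
  simp [mono, AddMonoidAlgebra.single_mul_single, Prod.mk_add_mk]

lemma mono_zero_zero : mono 0 0 = 1 := rfl

lemma neg_mono (a b : ℤ) : -mono a b = AddMonoidAlgebra.single (a, b) (-1) :=
  (AddMonoidAlgebra.single_neg _ _).symm

lemma coeff_mono_apply (a b : ℤ) (x : ℤ × ℤ) : (mono a b).coeff x = if (a, b) = x then 1 else 0 :=
  Finsupp.single_apply

/-- The matrix `G₂` of Example 4.5, representing `τ_Γ⁺` for the pretzel knot `P(−3,5,9)`. -/
noncomputable def torsionMatrix : Matrix (Fin 2) (Fin 2) TwoVarLaurent :=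
  !![mono 1 0 - mono 1 (-1) - mono 0 (-2),
      -mono (-1) (-6) - mono 0 (-5);
     -mono (-1) (-2) - mono 1 0 - mono 0 (-1),
      -mono (-2) (-6) - mono (-1) (-5) - mono 0 (-4) - mono 0 (-3) -
        mono 0 (-2) - mono 0 (-1) - 1]

noncomputable def torsionDet : TwoVarLaurent :=
  -mono (-1) (-6) - mono 1 0 + mono 0 (-4) + mono 0 (-3) + mono 0 (-2)

lemma det_torsionMatrix : torsionMatrix.det = torsionDet := by
  rw [torsionMatrix, det_fin_two_of, torsionDet, ← mono_zero_zero]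
  simp only [sub_mul, mul_sub, neg_mul, mul_neg, mono_mul]
  norm_num
  abel

lemma torsionDet_ne_single (m : ℤ × ℤ) (r : ℤ) : torsionDet ≠ AddMonoidAlgebra.single m r := by
  refine AddMonoidAlgebra.ne_single_of_mem_support (x := (0, -4)) (y := (0, -3)) (by decide)
    ?_ ?_ m r <;> simp [torsionDet, coeff_mono_apply]

theorem stmt_12
    (G₂ : Matrix (Fin 2) (Fin 2) TwoVarLaurent)
    (hG₂ : G₂ = !![mono 1 0 - mono 1 (-1) - mono 0 (-2),
                    -mono (-1) (-6) - mono 0 (-5);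
                   -mono (-1) (-2) - mono 1 0 - mono 0 (-1),
                    -mono (-2) (-6) - mono (-1) (-5) - mono 0 (-4) - mono 0 (-3) -
                      mono 0 (-2) - mono 0 (-1) - 1]) :
    G₂.det = -mono (-1) (-6) - mono 1 0 + mono 0 (-4) + mono 0 (-3) + mono 0 (-2) ∧
    ∀ a b : ℤ, G₂.det ≠ mono a b ∧ G₂.det ≠ -mono a b := by
  have hdet : G₂.det = torsionDet := hG₂ ▸ det_torsionMatrix
  refine ⟨hdet, fun a b => ⟨?_, ?_⟩⟩
  · rw [hdet]; exact torsionDet_ne_single (a, b) 1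
  · rw [hdet, neg_mono]; exact torsionDet_ne_single (a, b) (-1)
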